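/- Let n ≥ 2 and let D be any wire diagram on n wires. Then every saturated chain from D to 1̂ in P_n^* that contains a cover relation labeled (j,i) with j > i has a descent, i.e., has consecutive labels λ(x,y) >λ λ(y,z) for some length-two subchain x ⋖ y ⋖ z. -/

import Mathlib

open Equiv Finset

/-- A candidate wire diagram: a permutation of the `2 n` endpoint positions. -/
abbrev WDperm (n : ℕ) := Equiv.Perm (Fin (2 * n))

/-- `σ` is a wire diagram on `n` wires: a fixed-point-free involution of the `2 n` positions. -/
def IsWD {n : ℕ} (σ : WDperm n) : Prop := (∀ x, σ (σ x) = x) ∧ ∀ x, σ x ≠ x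

instance IsWD.decPred {n : ℕ} : DecidablePred (@IsWD n) := fun σ => by
  unfold IsWD; infer_instance

/-- Positions `a < c` are first endpoints of a pair of crossing wires `{a, σ a}`, `{c, σ c}`,
i.e. `a < c < σ a < σ c`. -/
def IsCrossing {n : ℕ} (σ : WDperm n) (a c : Fin (2 * n)) : Prop :=
  a < c ∧ c < σ a ∧ σ a < σ c

instance IsCrossing.dec {n : ℕ} (σ : WDperm n) (a c : Fin (2 * n)) :
    Decidable (IsCrossing σ a c) := by unfold IsCrossing; infer_instance

/-- The number `c(σ)` of crossings of `σ`. -/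
def ncross {n : ℕ} (σ : WDperm n) : ℕ :=
  (Finset.univ.filter (fun p : Fin (2 * n) × Fin (2 * n) => IsCrossing σ p.1 p.2)).card

/-- The nesting uncrossing of the crossing `{a, σ a}, {c, σ c}` (with `a < c < σ a < σ c`):
replace the pairs `{a,b},{c,d}` by `{a,d},{b,c}` where `b = σ a`, `d = σ c`. -/
def nestU {n : ℕ} (σ : WDperm n) (a c : Fin (2 * n)) : WDperm n :=
  Equiv.swap (σ a) (σ c) * σ * Equiv.swap (σ a) (σ c)

/-- The disjoint uncrossing: replace the pairs `{a,b},{c,d}` by `{a,c},{b,d}`. -/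
def disjU {n : ℕ} (σ : WDperm n) (a c : Fin (2 * n)) : WDperm n :=
  Equiv.swap (σ a) c * σ * Equiv.swap (σ a) c

/-- `τ` is obtained from `σ` by a nesting uncrossing of some crossing of `σ`. -/
def IsNestStep {n : ℕ} (σ τ : WDperm n) : Prop := ∃ a c, IsCrossing σ a c ∧ τ = nestU σ a c

/-- `τ` is obtained from `σ` by a disjoint uncrossing of some crossing of `σ`. -/
def IsDisjStep {n : ℕ} (σ τ : WDperm n) : Prop := ∃ a c, IsCrossing σ a c ∧ τ = disjU σ a c

/-- `τ` is obtained from `σ` by an uncrossing step that decreases the crossing number by one. -/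
def UncCov {n : ℕ} (σ τ : WDperm n) : Prop :=
  (IsNestStep σ τ ∨ IsDisjStep σ τ) ∧ ncross τ + 1 = ncross σ

/-- The dual uncrossing poset `P_n^*`: wire diagrams together with a top element `none = 1̂`
(the adjoined element `0̂` of `P_n`). -/
abbrev PStar (n : ℕ) := Option {σ : WDperm n // IsWD σ}

/-- The covering relation of `P_n^*`. -/
def Cov {n : ℕ} : PStar n → PStar n → Prop
  | some σ, some τ => UncCov σ.1 τ.1
  | some σ, none => ncross σ.1 = 0
  | none, _ => False

/-- The partial order of `P_n^*`: reflexive-transitive closure of the covering relation. -/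
def ple {n : ℕ} : PStar n → PStar n → Prop := Relation.ReflTransGen Cov

/-- The (0-indexed) name `w(σ)(x)` of the wire through position `x`: the number of wires whose
first endpoint is strictly smaller than the first endpoint of the wire through `x`. -/
def word {n : ℕ} (σ : WDperm n) (x : Fin (2 * n)) : ℕ :=
  (Finset.univ.filter (fun a : Fin (2 * n) => a < σ a ∧ a < min x (σ x))).card

/-- The start set `S(σ)`: the set of first endpoints of wires of `σ`. -/
def startSet {n : ℕ} (σ : WDperm n) : Finset (Fin (2 * n)) :=
  Finset.univ.filter (fun a => a < σ a)

/-- The noncrossing pair set `N(σ)` (on 0-indexed wire names): `(i, j)` with `i < j` for each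
nested pair of wires `i < j`, and `(j, i)` for each disjoint pair of wires `i < j`. -/
def NPairs {n : ℕ} (σ : WDperm n) : Set (ℕ × ℕ) :=
  {p | ∃ a c : Fin (2 * n), a < σ a ∧ c < σ c ∧ a < c ∧
        ((σ c < σ a ∧ p = (word σ a, word σ c)) ∨ (σ a < c ∧ p = (word σ c, word σ a)))}

/-- Lexicographic comparison of finsets via their increasing enumerations. -/
def finsetLexLE {m : ℕ} (A B : Finset (Fin m)) : Prop :=
  A = B ∨ List.Lex (· < ·) (A.sort (· ≤ ·)) (B.sort (· ≤ ·))

/-- Labels of the edge labeling: ordered pairs of (0-indexed) wire names, and a label `L`. -/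
inductive Lbl where
  | pair : ℕ → ℕ → Lbl
  | L : Lbl
deriving DecidableEq

/-- The total order `<λ` on labels. -/
def lblLT : Lbl → Lbl → Prop
  | .pair i j, .pair i' j' =>
      if i < j then (if i' < j' then i < i' ∨ (i = i' ∧ j < j') else True)
      else (if i' < j' then False else (j' < j ∨ (j = j' ∧ i' < i)))
  | .pair i j, .L => i < j
  | .L, .pair r s => s < r
  | .L, .L => False

/-- `≤λ` on labels. -/
def lblLE (p q : Lbl) : Prop := p = q ∨ lblLT p q

/-- The sorted list of positions where `σ` and `τ` differ. -/
def diffList {n : ℕ} (σ τ : WDperm n) : List (Fin (2 * n)) :=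
  (Finset.univ.filter (fun x => σ x ≠ τ x)).sort (· ≤ ·)

/-- The edge labeling `λ` of `P_n^*`: an uncrossing of the crossing formed by wires `k < m`
of the lower diagram gets label `(k, m)` if it is the nesting uncrossing and `(m, k)` if it is
the disjoint uncrossing; covers of the top element `1̂ = none` get the label `L`. -/
def lbl {n : ℕ} : PStar n → PStar n → Lbl
  | some σ, some τ =>
      match (diffList σ.1 τ.1)[0]?, (diffList σ.1 τ.1)[1]? with
      | some a, some c =>
          if τ.1 a = σ.1 c then Lbl.pair (word σ.1 a) (word σ.1 c)
          else Lbl.pair (word σ.1 c) (word σ.1 a)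
      | _, _ => Lbl.L
  | _, _ => Lbl.L

/-- `c` is a saturated chain from `u` to `v` in `P_n^*`. -/
def SatChain {n : ℕ} (c : List (PStar n)) (u v : PStar n) : Prop :=
  c.Chain' Cov ∧ c.head? = some u ∧ c.getLast? = some v

/-- The label sequence of a saturated chain. -/
def chainLabels {n : ℕ} (c : List (PStar n)) : List Lbl := c.zipWith lbl c.tail

/-- Lexicographic order on pairs of labels. -/
def pairLexLT (p q : Lbl × Lbl) : Prop := lblLT p.1 q.1 ∨ (p.1 = q.1 ∧ lblLT p.2 q.2)

/-- `x ⋖ y ⋖ z` is a topological ascent: its label pair is lexicographically strictly smaller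
than the label pair of every other saturated chain from `x` to `z`. -/
def TopAscent {n : ℕ} (x y z : PStar n) : Prop :=
  Cov x y ∧ Cov y z ∧ ∀ y' : PStar n, Cov x y' → Cov y' z → y' ≠ y →
    pairLexLT (lbl x y, lbl y z) (lbl x y', lbl y' z)

/-- `x ⋖ y ⋖ z` is a topological descent: a length-two chain that is not a topological ascent. -/
def TopDescent {n : ℕ} (x y z : PStar n) : Prop := Cov x y ∧ Cov y z ∧ ¬ TopAscent x y z

/-- Every length-two subchain of `c` is a topological ascent. -/
def AllTopAscents {n : ℕ} (c : List (PStar n)) : Prop :=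
  ∀ x y z : PStar n, [x, y, z] <:+: c → TopAscent x y z

/-- The number of inversions of a permutation. -/
def numInv {n : ℕ} (π : Equiv.Perm (Fin n)) : ℕ :=
  (Finset.univ.filter (fun p : Fin n × Fin n => p.1 < p.2 ∧ π p.2 < π p.1)).card

/-- One step of the Bruhat order: left multiplication by a transposition raising `inv` by one. -/
def BruhatStep {n : ℕ} (u v : Equiv.Perm (Fin n)) : Prop :=
  (∃ a b : Fin n, a ≠ b ∧ v = Equiv.swap a b * u) ∧ numInv v = numInv u + 1

/-- The Bruhat order on `S_n`. -/
def BruhatLE {n : ℕ} : Equiv.Perm (Fin n) → Equiv.Perm (Fin n) → Prop :=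
  Relation.ReflTransGen BruhatStep

/-- The set of second endpoints of wires of `σ`. -/
def secondEnds {n : ℕ} (σ : WDperm n) : Finset (Fin (2 * n)) :=
  Finset.univ.filter (fun b => σ b < b)

/-- The wire name at the `t`-th (0-indexed) second endpoint. -/
def piVal {n : ℕ} (σ : WDperm n) (t : ℕ) : ℕ :=
  (((secondEnds σ).sort (· ≤ ·))[t]?).elim 0 (word σ)

open Classical in
/-- The permutation `π(σ) ∈ S_n` reading the wire names at the second endpoints of `σ` in
increasing order of position. -/
noncomputable def piPerm {n : ℕ} (σ : WDperm n) : Equiv.Perm (Fin n) :=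
  if h : Function.Bijective (fun t : Fin n =>
      if ht : piVal σ (t : ℕ) < n then (⟨piVal σ (t : ℕ), ht⟩ : Fin n) else t)
  then Equiv.ofBijective _ h else 1

/-- Apply to the crossing at `(a, c)` the nesting (`nest = true`) or disjoint (`nest = false`)
uncrossing. -/
def uncrossAt {n : ℕ} (σ : WDperm n) (a c : Fin (2 * n)) (nest : Bool) : WDperm n :=
  if nest then nestU σ a c else disjU σ a c

/-! A label `(r, s)` lies above `L` exactly when `r > s`. Uncrossing labels are pairs of
distinct wire names, so a label that follows a label above `L` without being smaller than it
is again above `L`. Along a chain to `1̂` the labels therefore stay above `L` until a descent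
occurs; since the last cover is labeled `L`, a descent must occur. -/

theorem List.IsChain.exists_infix_of_propagate {α : Type*} {R P : α → α → Prop}
    {Q : α → α → α → Prop} {l : List α} {v : α} (hl : l.IsChain R)
    (hlast : l.getLast? = some v) (hv : ∀ x, ¬ P x v)
    (hstep : ∀ x y z, R x y → R y z → P x y → ¬ Q x y z → P y z)
    {x y : α} (hxy : [x, y] <:+: l) (hP : P x y) :
    ∃ a b d, [a, b, d] <:+: l ∧ Q a b d := by
  induction l generalizing x y with
  | nil => simp at hxy
  | cons u l ih =>
    have hne : l ≠ [] := by rintro rfl; simpa using hxy.length_le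
    have hlast' : l.getLast? = some v := by
      rwa [List.getLast?_cons, List.getLast?_eq_some_getLast hne, Option.getD_some,
        ← List.getLast?_eq_some_getLast hne] at hlast
    rcases List.infix_cons_iff.mp hxy with hpre | hinf
    · obtain ⟨l', hl'⟩ := hpre
      obtain ⟨rfl, rfl⟩ : x = u ∧ y :: l' = l := by simpa using hl'
      rcases l' with _ | ⟨z, l'⟩
      · simp only [List.getLast?_singleton, Option.some.injEq] at hlast'
        exact absurd (hlast' ▸ hP) (hv x)
      · simp only [List.isChain_cons_cons] at hl
        by_cases hQ : Q x y z
        · exact ⟨x, y, z, (List.prefix_cons_inj x).mpr (by simp) |>.isInfix, hQ⟩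
        · obtain ⟨a, b, d, habd, hq⟩ :=
            ih (List.isChain_cons_cons.mpr hl.2) hlast'
              (List.prefix_cons_inj y |>.mpr (by simp)).isInfix (hstep x y z hl.1 hl.2.1 hP hQ)
          exact ⟨a, b, d, habd.trans (List.infix_cons (List.infix_refl _)), hq⟩
    · obtain ⟨a, b, d, habd, hq⟩ := ih hl.tail hlast' hinf hP
      exact ⟨a, b, d, habd.trans (List.infix_cons (List.infix_refl _)), hq⟩

section Uncrossing

variable {n : ℕ} {σ τ : WDperm n} {a c : Fin (2 * n)}

lemma filter_ne_uncross_eq (hσ : Function.Involutive σ) (hcr : IsCrossing σ a c)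
    (hτ : τ = nestU σ a c ∨ τ = disjU σ a c) :
    Finset.univ.filter (fun x => σ x ≠ τ x) = [a, c, σ a, σ c].toFinset := by
  obtain ⟨hac, hcb, hbd⟩ := hcr
  ext x
  have hxa : σ x = σ a ↔ x = a := σ.injective.eq_iff
  have hxc : σ x = σ c ↔ x = c := σ.injective.eq_iff
  have hxa' : σ x = a ↔ x = σ a := hσ.eq_iff
  have hxc' : σ x = c ↔ x = σ c := hσ.eq_iff
  have ha := hσ a
  have hc := hσ c
  simp only [Finset.mem_filter_univ, List.mem_toFinset, List.mem_cons, List.not_mem_nil,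
    or_false]
  rcases hτ with rfl | rfl <;>
  · simp only [nestU, disjU, Perm.mul_apply, swap_apply_def]
    grind

lemma diffList_uncross (hσ : Function.Involutive σ) (hcr : IsCrossing σ a c)
    (hτ : τ = nestU σ a c ∨ τ = disjU σ a c) :
    diffList σ τ = [a, c, σ a, σ c] := by
  have hsorted : [a, c, σ a, σ c].Pairwise (· < ·) := by
    obtain ⟨hac, hcb, hbd⟩ := hcr
    simp only [List.pairwise_cons, List.mem_cons, List.not_mem_nil, or_false,
      forall_eq_or_imp, forall_eq, List.Pairwise.nil]
    grind
  rw [diffList, filter_ne_uncross_eq hσ hcr hτ,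
    List.toFinset_sort _ hsorted.nodup]
  exact hsorted.imp le_of_lt

lemma word_lt_word (ha : a < σ a) (hc : c < σ c) (hac : a < c) : word σ a < word σ c := by
  rw [word, word, min_eq_left ha.le, min_eq_left hc.le]
  have hsub : univ.filter (fun t => t < σ t ∧ t < a) ⊆ univ.filter (fun t => t < σ t ∧ t < c) :=
    Finset.monotone_filter_right _ fun _ _ ht => ⟨ht.1, ht.2.trans hac⟩
  exact Finset.card_lt_card
    ((Finset.ssubset_iff_of_subset hsub).mpr ⟨a, by simp [ha, hac], by simp⟩)

end Uncrossing

lemma Cov.exists_lbl_eq {n : ℕ} {σ τ : {σ : WDperm n // IsWD σ}} (h : Cov (some σ) (some τ)) :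
    ∃ k m, k < m ∧ (lbl (some σ) (some τ) = .pair k m ∨ lbl (some σ) (some τ) = .pair m k) := by
  obtain ⟨a, c, hcr, hτ⟩ : ∃ a c, IsCrossing σ.1 a c ∧
      (τ.1 = nestU σ.1 a c ∨ τ.1 = disjU σ.1 a c) := by
    rcases h.1 with ⟨a, c, hcr, hτ⟩ | ⟨a, c, hcr, hτ⟩
    exacts [⟨a, c, hcr, .inl hτ⟩, ⟨a, c, hcr, .inr hτ⟩]
  obtain ⟨hac, hcb, hbd⟩ := hcr
  refine ⟨_, _, word_lt_word (hac.trans hcb) (hcb.trans hbd) hac, ?_⟩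
  simp only [lbl, diffList_uncross σ.2.1 ⟨hac, hcb, hbd⟩ hτ, List.getElem?_cons_zero,
    List.getElem?_cons_succ]
  split_ifs <;> simp

lemma lbl_none {n : ℕ} (x : PStar n) : lbl x none = .L := by
  cases x <;> rfl

lemma lblLT_L_pair_of_not_lblLT {p : Lbl} {k m : ℕ} (hkm : k ≠ m) (hp : lblLT .L p)
    (h : ¬ lblLT (.pair k m) p) : lblLT .L (.pair k m) := by
  cases p with
  | L => exact hp.elim
  | pair r s =>
    simp only [lblLT] at hp ⊢
    rcases hkm.lt_or_gt with hlt | hgt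
    · exact absurd (by simp [lblLT, hlt, not_lt.mpr hp.le]) h
    · exact hgt

lemma lblLT_L_lbl_of_not_lblLT {n : ℕ} {x y z : PStar n} (hyz : Cov y z)
    (hxy : lblLT .L (lbl x y)) (h : ¬ lblLT (lbl y z) (lbl x y)) : lblLT .L (lbl y z) := by
  rcases z with _ | τ
  · exact absurd (lbl_none y ▸ hxy) h
  rcases y with _ | σ
  · exact hyz.elim
  obtain ⟨k, m, hkm, hlbl | hlbl⟩ := hyz.exists_lbl_eq <;> rw [hlbl] at h ⊢
  exacts [lblLT_L_pair_of_not_lblLT hkm.ne hxy h, lblLT_L_pair_of_not_lblLT hkm.ne' hxy h]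

theorem chain_with_disjoint_label_has_descent_general (n : ℕ)
    (D : {σ : WDperm n // IsWD σ}) (c : List (PStar n))
    (hc : SatChain c (some D) none)
    (i j : ℕ) (hij : i < j) (x y : PStar n)
    (hxy : [x, y] <:+: c) (hl : lbl x y = Lbl.pair j i) :
    ∃ a b d : PStar n, [a, b, d] <:+: c ∧ lblLT (lbl b d) (lbl a b) := by
  obtain ⟨hchain, -, hlast⟩ := hc
  refine hchain.exists_infix_of_propagate (P := fun x y => lblLT .L (lbl x y)) hlast
    (fun x => by simp [lbl_none, lblLT])
    (fun _ _ _ _ hyz => lblLT_L_lbl_of_not_lblLT hyz) hxy ?_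
  simpa [hl, lblLT] using hij

/-- Every saturated chain from a wire diagram `D` to `1̂` in `P_n^*` containing a cover relation
labeled `(j, i)` with `j > i` has a descent. -/
theorem chain_with_disjoint_label_has_descent (n : ℕ) (hn : 2 ≤ n)
    (D : {σ : WDperm n // IsWD σ}) (c : List (PStar n))
    (hc : SatChain c (some D) none)
    (i j : ℕ) (hij : i < j) (x y : PStar n)
    (hxy : [x, y] <:+: c) (hl : lbl x y = Lbl.pair j i) :
    ∃ a b d : PStar n, [a, b, d] <:+: c ∧ lblLT (lbl b d) (lbl a b) :=
  chain_with_disjoint_label_has_descent_general n D c hc i j hij x y hxy hl
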